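/- Let k be a field of characteristic zero, C a coassociative, counital, cocommutative coalgebra over k, and L a Lie algebra over k; equip Hom_k(C, L) with the convolution bracket. If L is nilpotent of nilpotency class at most n (i.e. F^{n+1} L = 0, where F denotes the lower central series), then the Lie algebra Hom_k(C, L) is nilpotent of nilpotency class at most n (i.e. F^{n+1} Hom_k(C, L) = 0). -/

import Mathlib

/-!
STATEMENT 3: With the convolution bracket on `Hom_k(C, L)`: if `L` is nilpotent of class `≤ n`
(`F^(n+1) L = 0`) then so is the convolution Lie algebra `Hom_k(C, L)`
(`F^(n+1) Hom_k(C, L) = 0`).  Here `lcsF k b m` denotes `F^(m+1)` for the bracket `b`.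
-/

open TensorProduct

/-- The Lie bracket of `L`, as a linear map `L ⊗ L → L`. -/
noncomputable def lieBeta (k L : Type*) [Field k] [LieRing L] [LieAlgebra k L] :
    L ⊗[k] L →ₗ[k] L :=
  TensorProduct.lift
    (LinearMap.mk₂ k (fun x y => ⁅x, y⁆) add_lie smul_lie lie_add lie_smul)

/-- The convolution bracket `β ∘ (f ⊗ g) ∘ Δ` on `Hom_k(C, L)`. -/
noncomputable def convBr {k C L : Type*} [Field k]
    [AddCommGroup C] [Module k C] [Coalgebra k C] [LieRing L] [LieAlgebra k L]
    (f g : C →ₗ[k] L) : C →ₗ[k] L :=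
  lieBeta k L ∘ₗ TensorProduct.map f g ∘ₗ Coalgebra.comul

/-- The lower central series of a bracket `b` on a `k`-module `M`:
`lcsF k b 0 = F¹ M = M` and `lcsF k b (n+1) = F^(n+2) M = [M, F^(n+1) M]`. -/
def lcsF (k : Type*) {M : Type*} [Field k] [AddCommGroup M] [Module k M]
    (b : M → M → M) : ℕ → Submodule k M
  | 0 => ⊤
  | n + 1 => Submodule.span k {m | ∃ x y, y ∈ lcsF k b n ∧ m = b x y}

/-! Evaluating a convolution bracket at `c` gives a sum of brackets in `L`, so by induction every
element of `F^(m+1) Hom_k(C, L)` takes its values in `F^(m+1) L`. -/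

section

variable {k C L : Type*} [Field k] [AddCommGroup C] [Module k C] [Coalgebra k C]
  [LieRing L] [LieAlgebra k L]

lemma lieBeta_tmul (a b : L) : lieBeta k L (a ⊗ₜ[k] b) = ⁅a, b⁆ := by
  simp [lieBeta]

lemma convBr_apply_mem {f g : C →ₗ[k] L} {P : Submodule k L}
    (hfg : ∀ a b, ⁅f a, g b⁆ ∈ P) (c : C) : convBr f g c ∈ P := by
  suffices h : ∀ t : C ⊗[k] C, lieBeta k L (TensorProduct.map f g t) ∈ P from h _
  intro t
  induction t using TensorProduct.induction_on with
  | zero => simp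
  | tmul a b => simpa [lieBeta_tmul] using hfg a b
  | add x y hx hy => simpa using P.add_mem hx hy

lemma apply_mem_lcsF_of_mem_lcsF_convBr {m : ℕ} {f : C →ₗ[k] L}
    (hf : f ∈ lcsF k (fun f g : C →ₗ[k] L => convBr f g) m) (c : C) :
    f c ∈ lcsF k (fun x y : L => ⁅x, y⁆) m := by
  induction m generalizing f c with
  | zero => exact Submodule.mem_top
  | succ m ih =>
    rw [lcsF] at hf
    induction hf using Submodule.span_induction generalizing c with
    | mem _ hmem =>
      obtain ⟨x, y, hy, rfl⟩ := hmem
      refine convBr_apply_mem (fun a b => ?_) c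
      rw [lcsF]
      exact Submodule.subset_span ⟨x a, y b, ih hy b, rfl⟩
    | zero => exact Submodule.zero_mem _
    | add f g _ _ hf hg => exact Submodule.add_mem _ (hf c) (hg c)
    | smul r f _ hf => exact Submodule.smul_mem _ r (hf c)

end

theorem convolution_nilpotent_of_nilpotent_general
    (k C L : Type*) [Field k]
    [AddCommGroup C] [Module k C] [Coalgebra k C]
    [LieRing L] [LieAlgebra k L]
    (n : ℕ)
    -- `L` is nilpotent of class at most `n`, i.e. `F^(n+1) L = 0`:
    (hL : lcsF k (fun x y : L => ⁅x, y⁆) n = ⊥) :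
    -- then `Hom_k(C, L)` is nilpotent of class at most `n`:
    lcsF k (fun f g : C →ₗ[k] L => convBr f g) n = ⊥ := by
  refine eq_bot_iff.mpr fun f hf => LinearMap.ext fun c => ?_
  simpa [hL] using apply_mem_lcsF_of_mem_lcsF_convBr hf c

theorem convolution_nilpotent_of_nilpotent
    (k C L : Type*) [Field k] [CharZero k]
    [AddCommGroup C] [Module k C] [Coalgebra k C]
    -- `C` is cocommutative:
    (hcc : (TensorProduct.comm k C C).toLinearMap ∘ₗ Coalgebra.comul =
      (Coalgebra.comul : C →ₗ[k] C ⊗[k] C))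
    [LieRing L] [LieAlgebra k L]
    (n : ℕ)
    -- `L` is nilpotent of class at most `n`, i.e. `F^(n+1) L = 0`:
    (hL : lcsF k (fun x y : L => ⁅x, y⁆) n = ⊥) :
    -- then `Hom_k(C, L)` is nilpotent of class at most `n`:
    lcsF k (fun f g : C →ₗ[k] L => convBr f g) n = ⊥ :=
  convolution_nilpotent_of_nilpotent_general k C L n hL
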